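/- arXiv:1802.08092 — 4 statements merged into one kernel-verified Lean document; each statement's English description precedes it below -/
import Mathlib

section
/- Let M be a model of a complete first-order theory T, let n ≥ 1, and let A ⊆ M^n be an H-free set such that any two distinct tuples of A have no common coordinates. Then any two tuples ā, b̄ ∈ A realize the same complete n-type over ∅ in M (i.e., for every formula φ(x₁,…,xₙ) without parameters, M ⊨ φ(ā) if and only if M ⊨ φ(b̄)). -/
open FirstOrder FirstOrder.Language Set

variable {L : Language} {M : Type*} [L.Structure M]

/-- The family of universes of elementary submodels. -/
def ESub (L : Language) (M : Type*) [L.Structure M] : Set (Set M) :=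
  {N | ∃ S : L.ElementarySubstructure M, (S : Set M) = N}

def IsHFree (L : Language) (M : Type*) [L.Structure M] {n : ℕ}
    (A : Set (Fin n → M)) : Prop :=
  A.Infinite ∧
    ∃ (k : ℕ) (φ : L.Formula (Fin n ⊕ Fin k)) (c : Fin k → M),
      A = {x | φ.Realize (Sum.elim x c)} ∧
      ∀ A' : Set (Fin n → M), A' ⊆ A → A'.Infinite →
        ∃ Z ∈ ESub L M, (∀ i, c i ∈ Z) ∧ A' = A ∩ {x | ∀ i, x i ∈ Z}

/-!
If `ψ` held on infinitely many but not all tuples of the H-free set `A`, freeness would give an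
elementary submodel `Z`, containing the parameters of `A`, with `A ∩ Z^n = A ∩ ψ`. A tuple of
`A \ ψ` witnesses an existential formula over those parameters, so by elementarity it has a
witness in `Z^n`, i.e. a tuple of `A ∩ Z^n` outside `ψ`. Hence, as `A` is infinite, each formula
holds on all of `A` or on none of it.
-/

theorem FirstOrder.Language.ElementaryEmbedding.exists_realize_comp {N : Type*} [L.Structure N]
    (f : N ↪ₑ[L] M) {α β : Type*} [Finite α] (φ : L.Formula (β ⊕ α)) (c : β → N)
    (h : ∃ x : α → M, φ.Realize (Sum.elim (f ∘ c) x)) :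
    ∃ x : α → N, φ.Realize (f ∘ Sum.elim c x) := by
  have hex := f.map_formula (φ.iExs α) c
  rw [Formula.realize_iExs, Formula.realize_iExs] at hex
  obtain ⟨x, hx⟩ := hex.1 h
  exact ⟨x, (f.map_formula φ _).2 hx⟩

theorem IsHFree.subset_of_infinite_inter {n : ℕ} {A : Set (Fin n → M)} (hA : IsHFree L M A)
    (ψ : L.Formula (Fin n)) (hinf : (A ∩ {x | ψ.Realize x}).Infinite) :
    A ⊆ {x | ψ.Realize x} := by
  obtain ⟨-, k, φ, c, hdef, hfree⟩ := hA
  obtain ⟨_, ⟨S, rfl⟩, hc, hS⟩ := hfree _ inter_subset_left hinf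
  intro b hbA
  by_contra hψb
  let θ : L.Formula (Fin k ⊕ Fin n) := (φ ⊓ ψ.not.relabel Sum.inl).relabel Sum.swap
  have hθ (x : Fin n → M) : θ.Realize (Sum.elim c x) ↔ x ∈ A ∧ ¬ ψ.Realize x := by
    simp [θ, hdef, Sum.elim_swap]
  obtain ⟨x, hx⟩ := S.subtype.exists_realize_comp θ (fun i => ⟨c i, hc i⟩)
    ⟨b, (hθ b).2 ⟨hbA, hψb⟩⟩
  rw [Sum.comp_elim] at hx
  obtain ⟨hxA, hxψ⟩ := (hθ _).1 hx
  have hxS : S.subtype ∘ x ∈ A ∩ {y | ∀ i, y i ∈ (S : Set M)} := ⟨hxA, fun i => (x i).2⟩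
  rw [← hS] at hxS
  exact hxψ hxS.2

theorem IsHFree.subset_or_subset_compl {n : ℕ} {A : Set (Fin n → M)} (hA : IsHFree L M A)
    (ψ : L.Formula (Fin n)) : A ⊆ {x | ψ.Realize x} ∨ A ⊆ {x | ψ.Realize x}ᶜ := by
  have hinf := hA.1
  rw [← inter_union_compl A {x | ψ.Realize x}, infinite_union] at hinf
  refine hinf.imp (hA.subset_of_infinite_inter ψ) fun h => ?_
  simpa [compl_ofPred] using hA.subset_of_infinite_inter ψ.not (by simpa [compl_ofPred] using h)

theorem stmt0_general {n : ℕ} (A : Set (Fin n → M)) (hA : IsHFree L M A)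
    (a b : Fin n → M) (haA : a ∈ A) (hbA : b ∈ A) :
    ∀ φ : L.Formula (Fin n), φ.Realize a ↔ φ.Realize b := by
  intro φ
  rcases hA.subset_or_subset_compl φ with h | h
  · exact iff_of_true (h haA) (h hbA)
  · exact iff_of_false (h haA) (h hbA)

theorem stmt0 (T : L.Theory) (hT : T.IsComplete) (hM : M ⊨ T)
    {n : ℕ} (hn : 1 ≤ n) (A : Set (Fin n → M)) (hA : IsHFree L M A)
    (hcoord : ∀ x ∈ A, ∀ y ∈ A, x ≠ y → ∀ i j, x i ≠ y j)
    (a b : Fin n → M) (haA : a ∈ A) (hbA : b ∈ A) :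
    ∀ φ : L.Formula (Fin n), φ.Realize a ↔ φ.Realize b :=
  stmt0_general A hA a b haA hbA
end

section
/- Let M be a model of a complete first-order theory T, let n ≥ 1, and let A ⊆ M^n be an H-free set which is definable without parameters by a formula φ(x₁,…,xₙ), and such that any two distinct tuples of A have no common coordinates. Then φ isolates a complete n-type over ∅: for every formula ψ(x₁,…,xₙ) without parameters, either M ⊨ ∀x̄(φ(x̄) → ψ(x̄)) or M ⊨ ∀x̄(φ(x̄) → ¬ψ(x̄)). -/
/-!
If both `φ ∧ ψ` and `φ ∧ ¬ψ` were satisfiable, one of the two pieces of `A`, say `A ∩ ψ(M)`, is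
infinite, so H-freeness cuts it out as `A ∩ Zⁿ` for an elementary submodel `Z`. But `Z`, being
elementary, also contains a realization of the parameter-free formula `φ ∧ ¬ψ`, which then lies
in `A ∩ Zⁿ = A ∩ ψ(M)`: a contradiction.
-/

open FirstOrder FirstOrder.Language Set

variable {L : Language} {M : Type*} [L.Structure M]

namespace FirstOrder.Language.ElementarySubstructure

variable {α : Type*} [Finite α] (S : L.ElementarySubstructure M)

theorem exists_realize_of_exists {ν : L.Formula α} (h : ∃ x : α → M, ν.Realize x) :
    ∃ x : α → M, (∀ i, x i ∈ S) ∧ ν.Realize x := by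
  let σ : L.Sentence := (ν.relabel (Sum.inr : α → Empty ⊕ α)).iExs α
  have hσ (N : Type _) [L.Structure N] : N ⊨ σ ↔ ∃ x : α → N, ν.Realize x := by
    simp only [σ, Sentence.Realize, Formula.realize_iExs, Formula.realize_relabel,
      Sum.elim_comp_inr]
  obtain ⟨x, hx⟩ := (hσ S).1 ((S.realize_sentence σ).2 ((hσ M).2 h))
  exact ⟨S.subtype ∘ x, fun i => (x i).2, (S.subtype.map_formula ν x).2 hx⟩

theorem forall_realize_imp_of_inter_eq_inter_pi {φ ψ : L.Formula α}
    (h : {x | φ.Realize x} ∩ {x | ψ.Realize x} = {x | φ.Realize x} ∩ {x | ∀ i, x i ∈ S}) :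
    ∀ x : α → M, φ.Realize x → ψ.Realize x := by
  by_contra! hne
  obtain ⟨x, hxS, hx⟩ := S.exists_realize_of_exists (ν := φ ⊓ ψ.not) (by simpa using hne)
  simp only [Formula.realize_inf, Formula.realize_not] at hx
  have hx' : x ∈ {x | φ.Realize x} ∩ {x | ψ.Realize x} := h ▸ ⟨hx.1, hxS⟩
  exact hx.2 hx'.2

end FirstOrder.Language.ElementarySubstructure

theorem IsHFree.forall_realize_imp_of_infinite {n : ℕ} {A : Set (Fin n → M)}
    (hA : IsHFree L M A) {φ : L.Formula (Fin n)} (hAdef : A = {x | φ.Realize x})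
    {ψ : L.Formula (Fin n)} (hinf : (A ∩ {x | ψ.Realize x}).Infinite) :
    ∀ x : Fin n → M, φ.Realize x → ψ.Realize x := by
  obtain ⟨-, _, _, _, -, hfree⟩ := hA
  obtain ⟨-, ⟨S, rfl⟩, -, hS⟩ := hfree _ inter_subset_left hinf
  subst hAdef
  exact S.forall_realize_imp_of_inter_eq_inter_pi hS

theorem stmt1_general {n : ℕ} (A : Set (Fin n → M)) (hA : IsHFree L M A)
    (φ : L.Formula (Fin n)) (hAdef : A = {x | φ.Realize x}) :
    ∀ ψ : L.Formula (Fin n),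
      (∀ x : Fin n → M, φ.Realize x → ψ.Realize x) ∨
      (∀ x : Fin n → M, φ.Realize x → ¬ ψ.Realize x) := by
  intro ψ
  have hsplit : A = (A ∩ {x | ψ.Realize x}) ∪ (A ∩ {x | (ψ.not).Realize x}) := by
    simp only [Formula.realize_not, ← inter_union_distrib_left, ← ofPred_or, em, ofPred_true,
      inter_univ]
  have hinf : (A ∩ {x | ψ.Realize x}).Infinite ∨ (A ∩ {x | (ψ.not).Realize x}).Infinite :=
    infinite_union.1 (hsplit ▸ hA.1)
  rcases hinf with hpos | hneg
  · exact Or.inl (hA.forall_realize_imp_of_infinite hAdef hpos)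
  · exact Or.inr fun x hx =>
      Formula.realize_not.1 (hA.forall_realize_imp_of_infinite hAdef hneg x hx)

theorem stmt1 (T : L.Theory) (hT : T.IsComplete) (hM : M ⊨ T)
    {n : ℕ} (hn : 1 ≤ n) (A : Set (Fin n → M)) (hA : IsHFree L M A)
    (φ : L.Formula (Fin n)) (hAdef : A = {x | φ.Realize x})
    (hcoord : ∀ x ∈ A, ∀ y ∈ A, x ≠ y → ∀ i j, x i ≠ y j) :
    ∀ ψ : L.Formula (Fin n),
      (∀ x : Fin n → M, φ.Realize x → ψ.Realize x) ∨
      (∀ x : Fin n → M, φ.Realize x → ¬ ψ.Realize x) :=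
  stmt1_general A hA φ hAdef
end

section
/- Let M be a model of a complete first-order theory T and let A ⊆ M be an H-free set. Then A has no nontrivial subsets definable with parameters from A: for every formula φ(x, y₁,…,yₖ) and every tuple ā = (a₁,…,aₖ) of elements of A, letting A₀ = {a₁,…,aₖ} and B = {b ∈ A : M ⊨ φ(b, ā)}, either B ∖ A₀ = ∅ or (A ∖ B) ∖ A₀ = ∅ (that is, B differs from ∅ or from A only by elements of the finite parameter set A₀). -/
open FirstOrder FirstOrder.Language Set

variable {L : Language} {M : Type*} [L.Structure M]

/-- `A ⊆ M` is H-free (arity 1). -/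
def IsHFree1 (L : Language) (M : Type*) [L.Structure M] (A : Set M) : Prop :=
  A.Infinite ∧
    ∃ (k : ℕ) (φ : L.Formula (Fin 1 ⊕ Fin k)) (c : Fin k → M),
      A = {x | φ.Realize (Sum.elim (fun _ => x) c)} ∧
      ∀ A' : Set M, A' ⊆ A → A'.Infinite →
        ∃ Z ∈ ESub L M, (∀ i, c i ∈ Z) ∧ A' = A ∩ Z

/-!
Let `B` be definable over a finite `F ⊆ A`. If `A \ B` is infinite, H-freeness yields an
elementary submodel `S` containing the parameters of `A` with `A ∩ S = (A \ B) ∪ F`. Then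
`(A ∩ B) \ F` is definable over `S` and disjoint from `S`, so by Tarski–Vaught it is empty.
Since `A` is infinite, this applies to `B` or to its complement.
-/

theorem Set.definable₁_setOf_realize {Z : Set M} {ι : Type*} (φ : L.Formula (Fin 1 ⊕ ι))
    {c : ι → M} (hc : ∀ i, c i ∈ Z) :
    Z.Definable₁ L {x | φ.Realize (Sum.elim (fun _ => x) c)} := by
  rw [Definable₁, definable_iff_exists_formula_sum]
  refine ⟨φ.relabel (Sum.elim (fun _ => Sum.inr 0) fun i => Sum.inl ⟨c i, hc i⟩), ?_⟩
  ext v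
  simp only [mem_ofPred_eq, Formula.realize_relabel]
  congr! 1
  ext (_ | _) <;> rfl

theorem Set.Finite.definable₁ {F : Set M} (hF : F.Finite) : F.Definable₁ L F := by
  have := hF.to_subtype
  have h : F.Definable L (⋃ x : F, {v : Fin 1 → M | v 0 ∈ ({x.1} : Set M)}) :=
    definable_iUnion_of_finite fun x => Definable.singleton_of_mem L x.2
  rw [Definable₁]
  convert h using 1
  ext v
  simp

theorem IsHFree1.diff_finite_or_inter_subset {A B F : Set M} (hA : IsHFree1 L M A)
    (hF : F.Finite) (hFA : F ⊆ A) (hB : F.Definable₁ L B) :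
    (A \ B).Finite ∨ A ∩ B ⊆ F := by
  obtain ⟨-, m, ψ, c, rfl, hfree⟩ := hA
  set A := {x | ψ.Realize (Sum.elim (fun _ => x) c)}
  refine or_iff_not_imp_left.mpr fun hinf => ?_
  obtain ⟨Z, ⟨S, rfl⟩, hcS, hA'⟩ :=
    hfree (A \ B ∪ F) (union_subset sdiff_subset hFA) (Infinite.mono subset_union_left hinf)
  have hFS : F ⊆ S := fun x hx => (hA'.subset (Or.inr hx)).2
  have hdef : (S : Set M).Definable₁ L ((A ∩ B) \ F) :=
    ((definable₁_setOf_realize ψ hcS).inter (hB.mono hFS)).sdiff (hF.definable₁.mono hFS)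
  by_contra hsub
  obtain ⟨y, ⟨⟨hyA, hyB⟩, hyF⟩, hyS⟩ :=
    S.meetsDefinable _ (sdiff_nonempty.mpr hsub) hdef
  rcases hA'.superset ⟨hyA, hyS⟩ with hy | hy
  exacts [hy.2 hyB, hyF hy]

theorem stmt2_general (A : Set M) (hA : IsHFree1 L M A)
    (k : ℕ) (φ : L.Formula (Fin 1 ⊕ Fin k)) (a : Fin k → M)
    (ha : ∀ i, a i ∈ A) :
    {b ∈ A | φ.Realize (Sum.elim (fun _ => b) a)} \ Set.range a = ∅ ∨
    (A \ {b ∈ A | φ.Realize (Sum.elim (fun _ => b) a)}) \ Set.range a = ∅ := by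
  set B := {b | φ.Realize (Sum.elim (fun _ => b) a)}
  have hF : (range a).Finite := finite_range a
  have hFA : range a ⊆ A := range_subset_iff.mpr ha
  have hB : (range a).Definable₁ L B := definable₁_setOf_realize φ fun i => mem_range_self i
  have hBc : (range a).Definable₁ L Bᶜ := hB.compl
  rcases hA.diff_finite_or_inter_subset hF hFA hB with hfin | hsub
  · rcases hA.diff_finite_or_inter_subset hF hFA hBc with hfin' | hsub'
    · refine absurd ?_ hA.1
      rw [← sdiff_union_inter A B, ← sdiff_compl]
      exact hfin.union hfin'
    · refine Or.inr (sdiff_eq_empty.mpr fun x ⟨hxA, hxφ⟩ => hsub' ⟨hxA, fun hxB => ?_⟩)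
      exact hxφ ⟨hxA, hxB⟩
  · exact Or.inl (sdiff_eq_empty.mpr hsub)

theorem stmt2 (T : L.Theory) (hT : T.IsComplete) (hM : M ⊨ T)
    (A : Set M) (hA : IsHFree1 L M A)
    (k : ℕ) (φ : L.Formula (Fin 1 ⊕ Fin k)) (a : Fin k → M)
    (ha : ∀ i, a i ∈ A) :
    {b ∈ A | φ.Realize (Sum.elim (fun _ => b) a)} \ Set.range a = ∅ ∨
    (A \ {b ∈ A | φ.Realize (Sum.elim (fun _ => b) a)}) \ Set.range a = ∅ :=
  stmt2_general A hA k φ a ha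
end

section
/- Let M be a model of a complete first-order theory T such that for all N₁, N₂ ∈ H(M) the intersection N₁ ∩ N₂ belongs to H(M) (in particular, this holds whenever L(M) is a lattice). Then M contains no H-free set A ⊆ M. -/
open FirstOrder FirstOrder.Language Set

variable {L : Language} {M : Type*} [L.Structure M]

def exAux {L : Language} {k : ℕ} (φ : L.Formula (Fin 1 ⊕ Fin k)) : L.Formula (Fin k) :=
  BoundedFormula.ex
    (BoundedFormula.relabel (Sum.elim (fun _ => Sum.inr 0) Sum.inl) φ :
      L.BoundedFormula (Fin k) 1)

lemma realize_exAux {L : Language} {N : Type*} [L.Structure N] {k : ℕ}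
    (φ : L.Formula (Fin 1 ⊕ Fin k)) (v : Fin k → N) :
    (exAux φ).Realize v ↔
      ∃ x : N, φ.Realize (Sum.elim (fun _ => x) v) := by
  rw [exAux, Formula.Realize, BoundedFormula.realize_ex]
  refine exists_congr fun a => ?_
  rw [BoundedFormula.realize_relabel]
  have h1 : (Sum.elim v ((Fin.snoc (default : Fin 0 → N) a : Fin 1 → N) ∘ Fin.castAdd 0)) ∘
      (Sum.elim (fun _ => Sum.inr 0) Sum.inl : Fin 1 ⊕ Fin k → Fin k ⊕ Fin 1) =
      Sum.elim (fun _ => a) v := by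
    funext x
    cases x with
    | inl x => simp [Fin.snoc]
    | inr x => simp
  rw [h1]
  exact iff_of_eq (congrArg _ (Subsingleton.elim _ _))

theorem stmt11 (T : L.Theory) (hT : T.IsComplete) (hM : M ⊨ T)
    (hint : ∀ N₁ ∈ ESub L M, ∀ N₂ ∈ ESub L M, N₁ ∩ N₂ ∈ ESub L M) :
    ¬ ∃ A : Set M, IsHFree1 L M A := by
  rintro ⟨A, hAinf, k, φ, c, hAdef, hfree⟩
  classical
  let f := hAinf.natEmbedding
  set g1 : ℕ → M := fun n => (f (2 * n) : M) with hg1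
  set g2 : ℕ → M := fun n => (f (2 * n + 1) : M) with hg2
  have hinj1 : Function.Injective g1 := fun a b h => by
    have := f.injective (Subtype.coe_injective h); omega
  have hinj2 : Function.Injective g2 := fun a b h => by
    have := f.injective (Subtype.coe_injective h); omega
  have hsub1 : Set.range g1 ⊆ A := by rintro _ ⟨n, rfl⟩; exact (f (2 * n)).2
  have hsub2 : Set.range g2 ⊆ A := by rintro _ ⟨n, rfl⟩; exact (f (2 * n + 1)).2
  have hdisj : Set.range g1 ∩ Set.range g2 = ∅ := by
    ext x
    simp only [Set.mem_inter_iff, Set.mem_range, Set.mem_empty_iff_false, iff_false, not_and]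
    rintro ⟨n, rfl⟩ ⟨m, hm⟩
    have := f.injective (Subtype.coe_injective hm)
    omega
  obtain ⟨Z₁, hZ₁, hc₁, hA₁⟩ := hfree _ hsub1 (Set.infinite_range_of_injective hinj1)
  obtain ⟨Z₂, hZ₂, hc₂, hA₂⟩ := hfree _ hsub2 (Set.infinite_range_of_injective hinj2)
  obtain ⟨S, hS⟩ := hint Z₁ hZ₁ Z₂ hZ₂
  have hcS : ∀ i, c i ∈ S := fun i => by
    have : c i ∈ (S : Set M) := hS ▸ ⟨hc₁ i, hc₂ i⟩
    exact this
  set cS : Fin k → S := fun i => ⟨c i, hcS i⟩ with hcSdef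
  -- the existential formula holds in M
  obtain ⟨a₀, ha₀⟩ := hAinf.nonempty
  have hexM : ∃ x : M, φ.Realize (Sum.elim (fun _ => x) c) :=
    ⟨a₀, by rw [hAdef] at ha₀; exact ha₀⟩
  have hψM : (exAux φ).Realize c := (realize_exAux φ c).2 hexM
  have hcomp : ((↑) : S → M) ∘ cS = c := by funext i; rfl
  have hsub_c : (⇑S.subtype ∘ cS) = c := by
    funext i; rfl
  have hψS : (exAux φ).Realize cS :=
    (S.subtype.map_formula _ cS).1 (by rw [hsub_c]; exact hψM)
  obtain ⟨x, hx⟩ := (realize_exAux φ cS).1 hψS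
  have hcomp2 : (⇑S.subtype ∘ Sum.elim (fun _ : Fin 1 => x) cS) =
      Sum.elim (fun _ : Fin 1 => (x : M)) c := by
    funext i; cases i <;> rfl
  have hxM : φ.Realize (Sum.elim (fun _ => (x : M)) c) := by
    have := (S.subtype.map_formula φ (Sum.elim (fun _ => x) cS)).2 hx
    rwa [hcomp2] at this
  have hxA : (x : M) ∈ A := by rw [hAdef]; exact hxM
  have hxZ : (x : M) ∈ Z₁ ∩ Z₂ := by rw [← hS]; exact x.2
  have hx1 : (x : M) ∈ Set.range g1 := by rw [hA₁]; exact ⟨hxA, hxZ.1⟩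
  have hx2 : (x : M) ∈ Set.range g2 := by rw [hA₂]; exact ⟨hxA, hxZ.2⟩
  have : (x : M) ∈ range g1 ∩ range g2 := ⟨hx1, hx2⟩
  rw [hdisj] at this
  exact this
end
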